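/- Let n ≥ 1, let h_U, h_E ∈ ℂⁿ, and let P, t, σ_U, σ_E be positive reals. For w ∈ ℂⁿ define the forward-link secrecy rate F(w) = t · log₂( σ_E²·(σ_U² + |⟨h_U, w⟩_lin|²) / ( σ_U²·(σ_E² + |⟨h_E, w⟩_lin|²) ) ), where ⟨h, w⟩_lin = Σᵢ hᵢ·wᵢ denotes the bilinear (unconjugated) pairing. Suppose there exists w₀ with ‖w₀‖² ≤ P and σ_E²·|⟨h_U, w₀⟩_lin|² > σ_U²·|⟨h_E, w₀⟩_lin|². Then every maximizer w⋆ of F over the set {w : ‖w‖² ≤ P} satisfies ‖w⋆‖² = P, i.e., the power constraint is active at the optimum. -/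

import Mathlib

/-!
Scaling a beamformer by `α` multiplies both received powers `|⟨h_U, w⟩|²`, `|⟨h_E, w⟩|²` by
`α²`, and the ratio `σ_E²(σ_U² + x) / (σ_U²(σ_E² + y))` strictly increases under
`(x, y) ↦ (c x, c y)`, `c > 1`, exactly when `σ_U² y < σ_E² x`, i.e. when the rate is positive.
A maximizer has rate at least that of `w₀`, hence positive, so if it left power unused,
rescaling it onto the sphere `‖w‖² = P` would beat it.
-/

open Finset

section Scaling

variable {𝕜 ι : Type*} [NormedField 𝕜] [Fintype ι]

theorem norm_sum_mul_smul_sq (h w : ι → 𝕜) (c : 𝕜) :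
    ‖∑ i, h i * (c • w) i‖ ^ 2 = ‖c‖ ^ 2 * ‖∑ i, h i * w i‖ ^ 2 := by
  have hsum : ∑ i, h i * (c • w) i = c * ∑ i, h i * w i := by
    rw [mul_sum]
    exact sum_congr rfl fun i _ => by simp only [Pi.smul_apply, smul_eq_mul]; ring
  rw [hsum, norm_mul, mul_pow]

theorem sum_norm_smul_sq (w : ι → 𝕜) (c : 𝕜) :
    ∑ i, ‖(c • w) i‖ ^ 2 = ‖c‖ ^ 2 * ∑ i, ‖w i‖ ^ 2 := by
  simp only [mul_sum, Pi.smul_apply, smul_eq_mul, norm_mul, mul_pow]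

theorem eq_zero_of_sum_norm_sq_eq_zero {w : ι → 𝕜} (hw : ∑ i, ‖w i‖ ^ 2 = 0) : w = 0 := by
  funext i
  have hi := (sum_eq_zero_iff_of_nonneg fun j _ => sq_nonneg ‖w j‖).mp hw i (mem_univ i)
  simpa using hi

end Scaling

/-- `gU`, `gE` stand for the received powers `‖∑ i, hU i * w i‖ ^ 2`, `‖∑ i, hE i * w i‖ ^ 2`. -/
noncomputable def secrecyRate (t σU σE gU gE : ℝ) : ℝ :=
  t * Real.logb 2 (σE ^ 2 * (σU ^ 2 + gU) / (σU ^ 2 * (σE ^ 2 + gE)))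

section SecrecyRate

variable {t σU σE gU gE : ℝ}

theorem secrecyRate_pos_iff (ht : 0 < t) (hσU : 0 < σU) (hσE : 0 < σE) (hgU : 0 ≤ gU)
    (hgE : 0 ≤ gE) : 0 < secrecyRate t σU σE gU gE ↔ σU ^ 2 * gE < σE ^ 2 * gU := by
  have hden : 0 < σU ^ 2 * (σE ^ 2 + gE) := by positivity
  rw [secrecyRate, mul_pos_iff_of_pos_left ht,
    Real.logb_pos_iff one_lt_two (by positivity), one_lt_div hden]
  constructor <;> intro h <;> linarith

theorem secrecyRate_lt_secrecyRate_mul (ht : 0 < t) (hσU : 0 < σU) (hσE : 0 < σE)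
    (hgU : 0 ≤ gU) (hgE : 0 ≤ gE) (hadv : σU ^ 2 * gE < σE ^ 2 * gU) {c : ℝ} (hc : 1 < c) :
    secrecyRate t σU σE gU gE < secrecyRate t σU σE (c * gU) (c * gE) := by
  have hden : 0 < σU ^ 2 * (σE ^ 2 + gE) := by positivity
  have hden' : 0 < σU ^ 2 * (σE ^ 2 + c * gE) := by
    have : 0 ≤ c * gE := mul_nonneg (by linarith) hgE
    positivity
  refine mul_lt_mul_of_pos_left (Real.logb_lt_logb one_lt_two (by positivity) ?_) ht
  rw [div_lt_div_iff₀ hden hden']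
  -- the difference of the two sides is `σU² σE² (c - 1) (σE² gU - σU² gE)`
  have hgain : 0 < σU ^ 2 * σE ^ 2 * ((c - 1) * (σE ^ 2 * gU - σU ^ 2 * gE)) := by
    have : 0 < c - 1 := by linarith
    have : 0 < σE ^ 2 * gU - σU ^ 2 * gE := by linarith
    positivity
  linear_combination hgain

end SecrecyRate

theorem power_constraint_active_general (n : ℕ) (hU hE : Fin n → ℂ)
    (P t σU σE : ℝ) (ht : 0 < t) (hσU : 0 < σU) (hσE : 0 < σE)
    (F : (Fin n → ℂ) → ℝ)
    (hF : ∀ w, F w = t * Real.logb 2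
      (σE ^ 2 * (σU ^ 2 + ‖∑ i, hU i * w i‖ ^ 2) /
        (σU ^ 2 * (σE ^ 2 + ‖∑ i, hE i * w i‖ ^ 2))))
    (h0 : ∃ w₀ : Fin n → ℂ, (∑ i, ‖w₀ i‖ ^ 2) ≤ P ∧
      σU ^ 2 * ‖∑ i, hE i * w₀ i‖ ^ 2 <
        σE ^ 2 * ‖∑ i, hU i * w₀ i‖ ^ 2)
    (wstar : Fin n → ℂ)
    (hmem : (∑ i, ‖wstar i‖ ^ 2) ≤ P)
    (hmax : ∀ w : Fin n → ℂ, (∑ i, ‖w i‖ ^ 2) ≤ P → F w ≤ F wstar) :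
    (∑ i, ‖wstar i‖ ^ 2) = P := by
  by_contra hne
  obtain ⟨w₀, hw₀P, hw₀⟩ := h0
  set S := ∑ i, ‖wstar i‖ ^ 2
  have hF_eq (w : Fin n → ℂ) :
      F w = secrecyRate t σU σE (‖∑ i, hU i * w i‖ ^ 2) (‖∑ i, hE i * w i‖ ^ 2) := hF w
  have hF_pos (w : Fin n → ℂ) := hF_eq w ▸ secrecyRate_pos_iff ht hσU hσE
    (sq_nonneg ‖∑ i, hU i * w i‖) (sq_nonneg ‖∑ i, hE i * w i‖)
  have hadv : σU ^ 2 * ‖∑ i, hE i * wstar i‖ ^ 2 < σE ^ 2 * ‖∑ i, hU i * wstar i‖ ^ 2 :=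
    (hF_pos wstar).mp (((hF_pos w₀).mpr hw₀).trans_le (hmax w₀ hw₀P))
  have hSpos : 0 < S := by
    refine (sum_nonneg fun i _ => sq_nonneg ‖wstar i‖).lt_of_ne fun hS => ?_
    simp [eq_zero_of_sum_norm_sq_eq_zero hS.symm] at hadv
  have hSP : S < P := hmem.lt_of_ne hne
  set c : ℂ := ((√(P / S) : ℝ) : ℂ)
  have hc : ‖c‖ ^ 2 = P / S := by
    rw [Complex.norm_real, Real.norm_eq_abs, sq_abs,
      Real.sq_sqrt (div_pos (hSpos.trans hSP) hSpos).le]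
  have hfeas : ∑ i, ‖(c • wstar) i‖ ^ 2 ≤ P := by
    rw [sum_norm_smul_sq, hc, div_mul_cancel₀ _ hSpos.ne']
  have hbetter : F wstar < F (c • wstar) := by
    rw [hF_eq, hF_eq, norm_sum_mul_smul_sq, norm_sum_mul_smul_sq]
    refine secrecyRate_lt_secrecyRate_mul ht hσU hσE (by positivity) (by positivity) hadv ?_
    rwa [hc, one_lt_div hSpos]
  exact (hmax _ hfeas).not_gt hbetter

/-- If some feasible beamformer achieves a strictly positive forward-link secrecy
rate, then every maximizer of the forward-link secrecy rate `F` over the power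
constraint set `{w : ‖w‖² ≤ P}` satisfies the power constraint with equality. -/
theorem power_constraint_active (n : ℕ) (hn : 1 ≤ n) (hU hE : Fin n → ℂ)
    (P t σU σE : ℝ) (hP : 0 < P) (ht : 0 < t) (hσU : 0 < σU) (hσE : 0 < σE)
    (F : (Fin n → ℂ) → ℝ)
    (hF : ∀ w, F w = t * Real.logb 2
      (σE ^ 2 * (σU ^ 2 + ‖∑ i, hU i * w i‖ ^ 2) /
        (σU ^ 2 * (σE ^ 2 + ‖∑ i, hE i * w i‖ ^ 2))))
    (h0 : ∃ w₀ : Fin n → ℂ, (∑ i, ‖w₀ i‖ ^ 2) ≤ P ∧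
      σU ^ 2 * ‖∑ i, hE i * w₀ i‖ ^ 2 <
        σE ^ 2 * ‖∑ i, hU i * w₀ i‖ ^ 2)
    (wstar : Fin n → ℂ)
    (hmem : (∑ i, ‖wstar i‖ ^ 2) ≤ P)
    (hmax : ∀ w : Fin n → ℂ, (∑ i, ‖w i‖ ^ 2) ≤ P → F w ≤ F wstar) :
    (∑ i, ‖wstar i‖ ^ 2) = P :=
  power_constraint_active_general n hU hE P t σU σE ht hσU hσE F hF h0 wstar hmem hmax
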